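/- arXiv:1208.1321 — 5 statements merged into one kernel-verified Lean document; each statement's English description precedes it below -/
import Mathlib

section
/- (First derivative test) Let r and θ be real-valued functions on [a,b] with r continuous and θ continuously differentiable. Suppose θ'(x)/r(x) is positive and monotonically increasing on [a,b], and 0 < λ₁ ≤ θ'(a)/r(a). Then |∫_a^b r(x)·exp(2πi·θ(x)) dx| ≤ 1/(π·λ₁). -/
/-! Put `g = r / θ'`, positive and decreasing, and `ψ = θ' e(θ)`, so the integrand is `g ψ`
and every partial integral `∫_a^c ψ = (e(θ c) - e(θ a)) / (2πi)` has norm at most `1/π`.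
Writing `g x = ∫_0^{g a} 1[t < g x] dt` and swapping the integrals (layer cake), each `t`-slice
integrates `ψ` over a superlevel set of `g`, which up to a null set is an interval `(a, c]`.
Hence `‖∫ g ψ‖ ≤ g a / π ≤ 1 / (π λ₁)`: a Bonnet-type second mean value bound. -/

open Real intervalIntegral MeasureTheory Set

theorem IsLowerSet.exists_Ioc_inter_ae_eq_Ioc {L : Set ℝ} (hL : IsLowerSet L) {a b : ℝ}
    (hab : a ≤ b) (ha : a ∈ L) (μ : Measure ℝ) [NullSingletonClass μ] :
    ∃ c ∈ Icc a b, (Ioc a b ∩ L : Set ℝ) =ᵐ[μ] Ioc a c := by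
  set S := L ∩ Icc a b
  have hS : S.Nonempty := ⟨a, ha, left_mem_Icc.2 hab⟩
  have hSb : BddAbove S := ⟨b, fun x hx => hx.2.2⟩
  refine ⟨sSup S, ⟨le_csSup hSb ⟨ha, left_mem_Icc.2 hab⟩, csSup_le hS fun x hx => hx.2.2⟩, ?_⟩
  have lower : Ioo a (sSup S) ⊆ Ioc a b ∩ L := fun x hx => by
    obtain ⟨y, hy, hxy⟩ := exists_lt_of_lt_csSup hS hx.2
    exact ⟨⟨hx.1, hxy.le.trans hy.2.2⟩, hL hxy.le hy.1⟩
  have upper : Ioc a b ∩ L ⊆ Ioc a (sSup S) := fun x hx =>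
    ⟨hx.1.1, le_csSup hSb ⟨hx.2, Ioc_subset_Icc_self hx.1⟩⟩
  exact (LE.le.eventuallyLE upper).antisymm
    (Ioo_ae_eq_Ioc.symm.le.trans (LE.le.eventuallyLE lower))

section SecondMeanValue

variable {E : Type*} [NormedAddCommGroup E] [NormedSpace ℝ E] [CompleteSpace E]
  {g : ℝ → ℝ} {ψ : ℝ → E} {a b M : ℝ}

theorem norm_integral_smul_le_of_antitone (hab : a ≤ b) (hg : Antitone g) (hgb : 0 ≤ g b)
    (hψ : IntervalIntegrable ψ volume a b) (hM : ∀ c ∈ Icc a b, ‖∫ x in a..c, ψ x‖ ≤ M) :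
    ‖∫ x in a..b, g x • ψ x‖ ≤ g a * M := by
  set K : ℝ → ℝ → E := fun t x => {x | t < g x}.indicator ψ x
  have hK : Integrable (Function.uncurry K)
      ((volume.restrict (Ioo 0 (g a))).prod (volume.restrict (Ioc a b))) :=
    (hψ.1.comp_snd _).indicator
      (measurableSet_lt measurable_fst (hg.measurable.comp measurable_snd))
  have layer_cake : EqOn (fun x => g x • ψ x) (fun x => ∫ t in Ioo 0 (g a), K t x) (Ioc a b) := by
    intro x hx
    have hgx : g x ≤ g a := hg hx.1.le
    change _ = ∫ t in Ioo 0 (g a), (Iio (g x)).indicator (fun _ => ψ x) t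
    rw [setIntegral_indicator measurableSet_Iio, Ioo_inter_Iio, min_eq_right hgx,
      setIntegral_const, Real.volume_real_Ioo_of_le (hgb.trans (hg hx.2)), sub_zero]
  have superlevel : ∀ t ∈ Ioo 0 (g a), ‖∫ x in Ioc a b, K t x‖ ≤ M := by
    intro t ht
    have hL : IsLowerSet {x | t < g x} := fun x y hyx hx => hx.trans_le (hg hyx)
    obtain ⟨c, hc, hae⟩ := IsLowerSet.exists_Ioc_inter_ae_eq_Ioc hL hab ht.2 volume
    rw [setIntegral_indicator (measurableSet_lt measurable_const hg.measurable),
      setIntegral_congr_set hae, ← intervalIntegral.integral_of_le hc.1]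
    exact hM c hc
  calc ‖∫ x in a..b, g x • ψ x‖ = ‖∫ t in Ioo 0 (g a), ∫ x in Ioc a b, K t x‖ := by
        rw [intervalIntegral.integral_of_le hab, setIntegral_congr_fun measurableSet_Ioc layer_cake,
          integral_integral_swap hK]
    _ ≤ M * volume.real (Ioo 0 (g a)) :=
        norm_setIntegral_le_of_norm_le_const measure_Ioo_lt_top superlevel
    _ = g a * M := by rw [Real.volume_real_Ioo_of_le (hgb.trans (hg hab)), sub_zero, mul_comm]

theorem norm_integral_smul_le_of_antitoneOn (hab : a ≤ b) (hg : AntitoneOn g (Icc a b))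
    (hgb : 0 ≤ g b) (hψ : IntervalIntegrable ψ volume a b)
    (hM : ∀ c ∈ Icc a b, ‖∫ x in a..c, ψ x‖ ≤ M) :
    ‖∫ x in a..b, g x • ψ x‖ ≤ g a * M := by
  set ĝ : ℝ → ℝ := fun x => g (projIcc a b hab x)
  have hĝ : Antitone ĝ := fun x y hxy => hg (projIcc a b hab x).2 (projIcc a b hab y).2
    (monotone_projIcc hab hxy)
  have hĝg : EqOn ĝ g (Icc a b) := fun x hx => by simp only [ĝ, projIcc_of_mem hab hx]
  have key := norm_integral_smul_le_of_antitone hab hĝ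
    (hĝg (right_mem_Icc.2 hab) ▸ hgb) hψ hM
  have hĝψ : ∫ x in a..b, ĝ x • ψ x = ∫ x in a..b, g x • ψ x :=
    integral_congr fun x hx => by simp only [hĝg (uIcc_of_le hab ▸ hx)]
  rwa [hĝg (left_mem_Icc.2 hab), hĝψ] at key

end SecondMeanValue

theorem norm_integral_deriv_mul_exp_le {a c : ℝ} {θ θ' : ℝ → ℝ}
    (hθ : ∀ x ∈ uIcc a c, HasDerivAt θ (θ' x) x)
    (hint : IntervalIntegrable (fun x => (θ' x : ℂ) * Complex.exp (2 * π * Complex.I * θ x))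
      volume a c) :
    ‖∫ x in a..c, (θ' x : ℂ) * Complex.exp (2 * π * Complex.I * θ x)‖ ≤ 1 / π := by
  set F : ℝ → ℂ := fun x => Complex.exp (2 * π * Complex.I * θ x) / (2 * π * Complex.I)
  have hF : ∀ x ∈ uIcc a c, HasDerivAt F (θ' x * Complex.exp (2 * π * Complex.I * θ x)) x := by
    intro x hx
    refine (((hθ x hx).ofReal_comp.const_mul (2 * π * Complex.I)).cexp.div_const
      (2 * π * Complex.I)).congr_deriv ?_
    field_simp [pi_ne_zero]
  have hnorm : ∀ x, ‖F x‖ = 1 / (2 * π) := fun x => by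
    simp [F, Complex.norm_exp, abs_of_pos pi_pos]
  calc ‖∫ x in a..c, (θ' x : ℂ) * Complex.exp (2 * π * Complex.I * θ x)‖ = ‖F c - F a‖ := by
        rw [integral_eq_sub_of_hasDerivAt hF hint]
    _ ≤ ‖F c‖ + ‖F a‖ := norm_sub_le _ _
    _ = 1 / π := by rw [hnorm, hnorm]; ring

theorem first_derivative_test_general (a b lam₁ : ℝ) (hab : a < b)
    (r θ θ' : ℝ → ℝ)
    (hθ : ∀ x ∈ Set.Icc a b, HasDerivAt θ (θ' x) x)
    (hθ' : ContinuousOn θ' (Set.Icc a b))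
    (hpos : ∀ x ∈ Set.Icc a b, 0 < θ' x / r x)
    (hmono : MonotoneOn (fun x => θ' x / r x) (Set.Icc a b))
    (hlam : 0 < lam₁) (hlam₁ : lam₁ ≤ θ' a / r a) :
    ‖∫ x in a..b, (r x : ℂ) * Complex.exp (2 * π * Complex.I * (θ x))‖ ≤ 1 / (π * lam₁) := by
  set g : ℝ → ℝ := fun x => (θ' x / r x)⁻¹
  have hg : AntitoneOn g (Icc a b) := fun x hx y hy hxy =>
    inv_anti₀ (hpos x hx) (hmono hx hy hxy)
  have hψ : ContinuousOn (fun x => (θ' x : ℂ) * Complex.exp (2 * π * Complex.I * θ x))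
      (Icc a b) := by
    have hθc : ContinuousOn θ (Icc a b) := fun x hx => (hθ x hx).continuousAt.continuousWithinAt
    fun_prop
  have hfactor : EqOn (fun x => (r x : ℂ) * Complex.exp (2 * π * Complex.I * θ x))
      (fun x => g x • ((θ' x : ℂ) * Complex.exp (2 * π * Complex.I * θ x))) (uIcc a b) := by
    intro x hx
    rw [uIcc_of_le hab.le] at hx
    have hθx : (θ' x : ℂ) ≠ 0 := by exact_mod_cast (div_ne_zero_iff.1 (hpos x hx).ne').1
    simp only [g, inv_div, Complex.real_smul]
    push_cast
    field_simp
  rw [integral_congr hfactor]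
  calc _ ≤ g a * (1 / π) := norm_integral_smul_le_of_antitoneOn hab.le hg
        (inv_pos.2 (hpos b (right_mem_Icc.2 hab.le))).le (hψ.intervalIntegrable_of_Icc hab.le)
        fun c hc => norm_integral_deriv_mul_exp_le
          (fun x hx => hθ x (Icc_subset_Icc_right hc.2 (uIcc_of_le hc.1 ▸ hx)))
          ((hψ.mono (Icc_subset_Icc_right hc.2)).intervalIntegrable_of_Icc hc.1)
    _ ≤ lam₁⁻¹ * (1 / π) := by gcongr; exact inv_anti₀ hlam hlam₁
    _ = 1 / (π * lam₁) := by field_simp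

theorem first_derivative_test (a b lam₁ : ℝ) (hab : a < b)
    (r θ θ' : ℝ → ℝ)
    (hr : ContinuousOn r (Set.Icc a b))
    (hθ : ∀ x ∈ Set.Icc a b, HasDerivAt θ (θ' x) x)
    (hθ' : ContinuousOn θ' (Set.Icc a b))
    (hpos : ∀ x ∈ Set.Icc a b, 0 < θ' x / r x)
    (hmono : MonotoneOn (fun x => θ' x / r x) (Set.Icc a b))
    (hlam : 0 < lam₁) (hlam₁ : lam₁ ≤ θ' a / r a) :
    ‖∫ x in a..b, (r x : ℂ) * Complex.exp (2 * π * Complex.I * (θ x))‖ ≤ 1 / (π * lam₁) :=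
  first_derivative_test_general a b lam₁ hab r θ θ' hθ hθ' hpos hmono hlam hlam₁
end

section
/- Let N ≥ 2 and γ ≥ 1 be reals, φ(y) = sin²(y), and G₀(y) = (N/π)·γ·sin(y) for y ∈ [0, π/2]. Then |∫_0^{π/2} φ(y)·exp(2πi·G₀(y)) dy| ≤ 2·(Nγ)^{−1/2}. -/
/-!
With `M = N γ` the phase is `2 M sin y`, and `sin² y = h y · (2 M sin y)'` for the amplitude
`h y = (sec y - cos y) / (2 M)`, which increases from `h 0 = 0`. Integrating by parts on
`[0, π/2 - δ]` therefore bounds that part of the integral by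
`2 h (π/2 - δ) = (1/sin δ - sin δ) / M`, and the remaining interval of length `δ` contributes
at most `δ`. For `δ = M^(-1/2)` the first term is `δ² cos² δ / sin δ ≤ δ`, since `δ ≤ tan δ`.
-/

open Real intervalIntegral

open Complex in
theorem norm_integral_mul_deriv_mul_exp_le {a b : ℝ} (hab : a ≤ b) {h h' g g' : ℝ → ℝ}
    (hh : ∀ y ∈ Set.uIcc a b, HasDerivAt h (h' y) y)
    (hg : ∀ y ∈ Set.uIcc a b, HasDerivAt g (g' y) y)
    (hh'_int : IntervalIntegrable h' MeasureTheory.volume a b)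
    (hg'_int : IntervalIntegrable g' MeasureTheory.volume a b)
    (hh'_nonneg : ∀ y ∈ Set.Ioc a b, 0 ≤ h' y) :
    ‖∫ y in a..b, (h y : ℂ) * (g' y * exp (g y * I))‖ ≤ |h a| + |h b| + (h b - h a) := by
  have hv (y) (hy : y ∈ Set.uIcc a b) :
      HasDerivAt (fun y => -I * exp (g y * I)) (g' y * exp (g y * I)) y := by
    refine (((hg y hy).ofReal_comp.mul_const I).cexp.const_mul (-I)).congr_deriv ?_
    linear_combination (-(g' y : ℂ) * exp (g y * I)) * I_mul_I
  have hg_cont : ContinuousOn g (Set.uIcc a b) :=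
    fun y hy => (hg y hy).continuousAt.continuousWithinAt
  have hexp_cont : ContinuousOn (fun y => exp (g y * I)) (Set.uIcc a b) := by fun_prop
  rw [integral_mul_deriv_eq_deriv_mul (fun y hy => (hh y hy).ofReal_comp) hv
    ⟨hh'_int.1.ofReal, hh'_int.2.ofReal⟩
    (IntervalIntegrable.mul_continuousOn ⟨hg'_int.1.ofReal, hg'_int.2.ofReal⟩ hexp_cont)]
  have hrem : ‖∫ y in a..b, (h' y : ℂ) * (-I * exp (g y * I))‖ ≤ h b - h a := by
    rw [← integral_eq_sub_of_hasDerivAt hh hh'_int]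
    refine norm_integral_le_of_norm_le hab (Filter.Eventually.of_forall fun y hy => ?_) hh'_int
    simp [Complex.norm_exp, abs_of_nonneg (hh'_nonneg y hy)]
  calc _ ≤ ‖(h b : ℂ) * (-I * exp (g b * I))‖ + ‖(h a : ℂ) * (-I * exp (g a * I))‖
        + ‖∫ y in a..b, (h' y : ℂ) * (-I * exp (g y * I))‖ :=
          (norm_sub_le _ _).trans (add_le_add_left (norm_sub_le _ _) _)
    _ ≤ |h a| + |h b| + (h b - h a) := by
      simp only [norm_mul, norm_neg, norm_I, norm_exp_ofReal_mul_I, Complex.norm_real,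
        Real.norm_eq_abs, mul_one]
      linarith

theorem hasDerivAt_inv_cos_sub_cos {y : ℝ} (hy : cos y ≠ 0) :
    HasDerivAt (fun y => (cos y)⁻¹ - cos y) (sin y / cos y ^ 2 + sin y) y :=
  (((hasDerivAt_cos y).inv hy).sub (hasDerivAt_cos y)).congr_deriv (by ring)

theorem mul_cos_sq_le_sin {x : ℝ} (hx0 : 0 ≤ x) (hx : x ≤ π / 2) :
    x * cos x ^ 2 ≤ sin x := by
  rcases hx.lt_or_eq with hx | rfl
  · have hcos : 0 < cos x := cos_pos_of_mem_Ioo ⟨by linarith [pi_pos], hx⟩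
    have htan : x * cos x ≤ sin x := by
      have := mul_le_mul_of_nonneg_right (le_tan hx0 hx) hcos.le
      rwa [tan_eq_sin_div_cos, div_mul_cancel₀ _ hcos.ne'] at this
    nlinarith [cos_le_one x, mul_nonneg hx0 hcos.le]
  · simp

theorem rpow_neg_one_half_sq_mul {M : ℝ} (hM : 0 < M) : M * (M ^ (-(1 : ℝ) / 2)) ^ 2 = 1 := by
  rw [← rpow_natCast, ← rpow_mul hM.le]
  norm_num [rpow_neg_one, hM.ne']

theorem norm_integral_sin_sq_mul_exp_le {M b : ℝ} (hM : 0 < M) (hb0 : 0 ≤ b) (hb : b < π / 2) :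
    ‖∫ y in 0..b, (sin y : ℂ) ^ 2 * Complex.exp ((2 * M * sin y : ℝ) * Complex.I)‖
      ≤ ((cos b)⁻¹ - cos b) / M := by
  have hcos : ∀ y ∈ Set.uIcc 0 b, 0 < cos y := by
    intro y hy
    rw [Set.uIcc_of_le hb0] at hy
    exact cos_pos_of_mem_Ioo ⟨by linarith [pi_pos, hy.1], hy.2.trans_lt hb⟩
  have hamp : ∀ y ∈ Set.uIcc 0 b,
      (sin y : ℂ) ^ 2 * Complex.exp ((2 * M * sin y : ℝ) * Complex.I)
        = (((cos y)⁻¹ - cos y) / (2 * M) : ℝ)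
          * ((2 * M * cos y : ℝ) * Complex.exp ((2 * M * sin y : ℝ) * Complex.I)) := by
    intro y hy
    have : sin y ^ 2 = ((cos y)⁻¹ - cos y) / (2 * M) * (2 * M * cos y) := by
      field_simp [(hcos y hy).ne', hM.ne']
      linear_combination sin_sq_add_cos_sq y
    rw [← mul_assoc]
    exact_mod_cast
      congrArg (fun r : ℝ => (r : ℂ) * Complex.exp ((2 * M * sin y : ℝ) * Complex.I)) this
  rw [integral_congr hamp]
  refine (norm_integral_mul_deriv_mul_exp_le hb0
    (h' := fun y => (sin y / cos y ^ 2 + sin y) / (2 * M))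
    (fun y hy => (hasDerivAt_inv_cos_sub_cos (hcos y hy).ne').div_const (2 * M))
    (fun y _ => (hasDerivAt_sin y).const_mul (2 * M)) ?_
    ((by fun_prop : Continuous fun y => 2 * M * cos y).intervalIntegrable _ _) ?_).trans ?_
  · refine ContinuousOn.intervalIntegrable fun y hy => ?_
    have hcy := (hcos y hy).ne'
    exact (((continuous_sin.continuousAt.div (continuous_cos.pow 2).continuousAt
      (pow_ne_zero 2 hcy)).add continuous_sin.continuousAt).div_const _).continuousWithinAt
  · intro y hy
    have : 0 ≤ sin y := sin_nonneg_of_nonneg_of_le_pi hy.1.le (by linarith [hy.2])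
    positivity
  · have hcb := hcos b Set.right_mem_uIcc
    have hamp_b : 0 ≤ ((cos b)⁻¹ - cos b) / (2 * M) := by
      have := (cos_le_one b).trans ((one_le_inv₀ hcb).mpr (cos_le_one b))
      exact div_nonneg (sub_nonneg.mpr this) (by positivity)
    simp only [cos_zero, inv_one, sub_self, zero_div, abs_zero, abs_of_nonneg hamp_b]
    exact le_of_eq (by ring)

theorem norm_integral_sin_sq_mul_exp_le_two_mul {M δ : ℝ} (hδ0 : 0 < δ) (hδ : δ ≤ π / 2)
    (hMδ : M * δ ^ 2 = 1) :
    ‖∫ y in 0..π / 2, (sin y : ℂ) ^ 2 * Complex.exp ((2 * M * sin y : ℝ) * Complex.I)‖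
      ≤ 2 * δ := by
  have hM : 0 < M := by nlinarith [sq_nonneg δ]
  have hF : Continuous fun y : ℝ =>
      (sin y : ℂ) ^ 2 * Complex.exp ((2 * M * sin y : ℝ) * Complex.I) := by fun_prop
  rw [← integral_add_adjacent_intervals (hF.intervalIntegrable 0 (π / 2 - δ))
    (hF.intervalIntegrable _ _)]
  have hhead := norm_integral_sin_sq_mul_exp_le hM (sub_nonneg.mpr hδ) (sub_lt_self _ hδ0)
  rw [cos_pi_div_two_sub] at hhead
  have htail : ‖∫ y in π / 2 - δ..π / 2,
      (sin y : ℂ) ^ 2 * Complex.exp ((2 * M * sin y : ℝ) * Complex.I)‖ ≤ δ := by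
    have := norm_integral_le_of_norm_le_const (a := π / 2 - δ) (b := π / 2) (C := 1)
      (f := fun y : ℝ => (sin y : ℂ) ^ 2 * Complex.exp ((2 * M * sin y : ℝ) * Complex.I))
      fun y _ => by
        simp only [norm_mul, norm_pow, Complex.norm_real, Complex.norm_exp_ofReal_mul_I,
          Real.norm_eq_abs, sq_abs, mul_one]
        exact sin_sq_le_one y
    rwa [sub_sub_cancel, abs_of_pos hδ0, one_mul] at this
  have hsin : 0 < sin δ := sin_pos_of_pos_of_lt_pi hδ0 (by linarith [pi_pos])
  have hbound : ((sin δ)⁻¹ - sin δ) / M ≤ δ := by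
    have := mul_cos_sq_le_sin hδ0.le hδ
    rw [div_le_iff₀ hM]
    field_simp
    nlinarith [sin_sq_add_cos_sq δ]
  calc _ ≤ _ := norm_add_le _ _
    _ ≤ 2 * δ := by linarith

theorem zero_order_estimate_general (N γ : ℝ) (hNγ : 4 / π^2 ≤ N * γ) :
    ‖∫ y in (0:ℝ)..(π/2), ((Real.sin y)^2 : ℂ) *
        Complex.exp (2 * π * Complex.I * ((N/π) * γ * Real.sin y))‖
      ≤ 2 * (N * γ)^(-(1:ℝ)/2) := by
  have hM : 0 < N * γ := (by positivity : (0 : ℝ) < 4 / π ^ 2).trans_le hNγ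
  set δ := (N * γ) ^ (-(1 : ℝ) / 2)
  have hδ0 : 0 < δ := rpow_pos_of_pos hM _
  have hMδ : N * γ * δ ^ 2 = 1 := rpow_neg_one_half_sq_mul hM
  have hδ : δ ≤ π / 2 := by
    refine (pow_le_pow_iff_left₀ hδ0.le (by positivity) two_ne_zero).mp ?_
    have := (div_le_iff₀ (by positivity)).mp hNγ
    nlinarith
  have hphase (y : ℝ) : 2 * π * Complex.I * ((N / π) * γ * Real.sin y)
      = ((2 * (N * γ) * sin y : ℝ) : ℂ) * Complex.I := by
    push_cast
    field_simp [Complex.ofReal_ne_zero.mpr pi_ne_zero]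
  simp_rw [hphase]
  exact norm_integral_sin_sq_mul_exp_le_two_mul hδ0 hδ hMδ

theorem zero_order_estimate (N γ : ℝ) (hN : 2 ≤ N) (hγ : 1 ≤ γ)
    (hNγ : 4 / π^2 ≤ N * γ) :
    ‖∫ y in (0:ℝ)..(π/2), ((Real.sin y)^2 : ℂ) *
        Complex.exp (2 * π * Complex.I * ((N/π) * γ * Real.sin y))‖
      ≤ 2 * (N * γ)^(-(1:ℝ)/2) :=
  zero_order_estimate_general N γ hNγ
end

section
/- Let N ≥ 2, γ ≥ 1 be reals and ν a real number with ν ≥ γ. Set φ(y) = sin²(y) and G_ν(y) = (N/π)·(γ·sin(y) − ν·y). Then |∫_0^{π/2} φ(y)·exp(2πi·G_ν(y)) dy| ≤ 4/(Nγ). -/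
/-!
Integrate by parts against `exp (θ y * I)`, `θ y = 2N(γ sin y - ν y)`, with the amplitude
`H = sin² / θ'`: this bounds the integral by `|H 0| + |H (π/2)| + ∫ |H'|`. As a rational function
of `cos y`, `H` is the sum of a polynomial part, increasing on `[0, π/2]`, and a pole part
`(ν² - γ²) / (2Nγ² (ν - γ cos y))`, decreasing there, so `∫ |H'|` is at most the sum of their
increments. Everything evaluates to `1/(Nγ) + 1/(Nν) ≤ 2/(Nγ)`.
-/

open Real Set intervalIntegral MeasureTheory

theorem norm_integral_mul_exp_le {a b : ℝ} (hab : a ≤ b) {φ θ θ' H H' : ℝ → ℝ}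
    (hθc : ContinuousOn θ (Icc a b)) (hθ : ∀ y ∈ Ioo a b, HasDerivAt θ (θ' y) y)
    (hHc : ContinuousOn H (Icc a b)) (hH : ∀ y ∈ Ioo a b, HasDerivAt H (H' y) y)
    (hH' : IntervalIntegrable H' volume a b) (hφ : IntervalIntegrable φ volume a b)
    (hφH : ∀ y ∈ Ioo a b, H y * θ' y = φ y) :
    ‖∫ y in a..b, (φ y : ℂ) * Complex.exp (θ y * Complex.I)‖
      ≤ |H a| + |H b| + ∫ y in a..b, |H' y| := by
  set e : ℝ → ℂ := fun y => Complex.exp (θ y * Complex.I)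
  have he : ContinuousOn e (Icc a b) := by fun_prop
  have he_norm (y : ℝ) : ‖e y‖ = 1 := Complex.norm_exp_ofReal_mul_I _
  have hint {f : ℝ → ℝ} (hf : IntervalIntegrable f volume a b) :
      IntervalIntegrable (fun y => (f y : ℂ) * e y) volume a b :=
    IntervalIntegrable.mul_continuousOn ⟨hf.1.ofReal, hf.2.ofReal⟩ (by rwa [uIcc_of_le hab])
  have hFTC : ∫ y in a..b, ((H' y : ℂ) * e y + Complex.I * ((φ y : ℂ) * e y))
      = H b * e b - H a * e a := by
    refine integral_eq_sub_of_hasDerivAt_of_le hab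
      ((Complex.continuous_ofReal.comp_continuousOn hHc).mul he) (fun y hy => ?_)
      ((hint hH').add ((hint hφ).const_mul _))
    have := (hH y hy).ofReal_comp.mul ((hθ y hy).ofReal_comp.mul_const Complex.I).cexp
    refine this.congr_deriv ?_
    rw [← hφH y hy]
    push_cast
    ring
  rw [integral_add (hint hH') ((hint hφ).const_mul _), intervalIntegral.integral_const_mul] at hFTC
  have hIBP : ∫ y in a..b, (φ y : ℂ) * e y
      = -Complex.I * (H b * e b - H a * e a - ∫ y in a..b, (H' y : ℂ) * e y) := by
    linear_combination (-Complex.I) * hFTC + (∫ y in a..b, (φ y : ℂ) * e y) * Complex.I_sq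
  calc ‖∫ y in a..b, (φ y : ℂ) * e y‖
      = ‖H b * e b - H a * e a - ∫ y in a..b, (H' y : ℂ) * e y‖ := by simp [hIBP]
    _ ≤ ‖(H b : ℂ) * e b‖ + ‖(H a : ℂ) * e a‖
          + ‖∫ y in a..b, (H' y : ℂ) * e y‖ :=
      (norm_sub_le _ _).trans (by gcongr; exact norm_sub_le _ _)
    _ ≤ |H a| + |H b| + ∫ y in a..b, |H' y| := by
      have hH'e : ‖∫ y in a..b, (H' y : ℂ) * e y‖ ≤ ∫ y in a..b, |H' y| :=
        (intervalIntegral.norm_integral_le_integral_norm hab).trans_eq (by simp [he_norm])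
      simp only [norm_mul, he_norm, Complex.norm_real, Real.norm_eq_abs, mul_one]
      linarith

theorem intervalIntegrable_deriv_of_nonneg_of_le {a b : ℝ} (hab : a ≤ b) {P P' : ℝ → ℝ}
    (hPc : ContinuousOn P (Icc a b)) (hP : ∀ y ∈ Ioo a b, HasDerivAt P (P' y) y)
    (hP' : ∀ y ∈ Ioo a b, 0 ≤ P' y) : IntervalIntegrable P' volume a b :=
  (intervalIntegrable_iff_integrableOn_Ioc_of_le hab).2 (integrableOn_deriv_of_nonneg hPc hP hP')

theorem intervalIntegrable_deriv_of_nonpos_of_le {a b : ℝ} (hab : a ≤ b) {Q Q' : ℝ → ℝ}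
    (hQc : ContinuousOn Q (Icc a b)) (hQ : ∀ y ∈ Ioo a b, HasDerivAt Q (Q' y) y)
    (hQ' : ∀ y ∈ Ioo a b, Q' y ≤ 0) : IntervalIntegrable Q' volume a b := by
  simpa only [neg_neg] using (intervalIntegrable_deriv_of_nonneg_of_le (P' := -Q') hab hQc.neg
    (fun y hy => (hQ y hy).neg) (fun y hy => neg_nonneg.2 (hQ' y hy))).neg

theorem integral_abs_add_le_of_nonneg_of_nonpos {a b : ℝ} (hab : a ≤ b)
    {P P' Q Q' : ℝ → ℝ}
    (hPc : ContinuousOn P (Icc a b)) (hP : ∀ y ∈ Ioo a b, HasDerivAt P (P' y) y)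
    (hP' : ∀ y ∈ Ioo a b, 0 ≤ P' y)
    (hQc : ContinuousOn Q (Icc a b)) (hQ : ∀ y ∈ Ioo a b, HasDerivAt Q (Q' y) y)
    (hQ' : ∀ y ∈ Ioo a b, Q' y ≤ 0) :
    ∫ y in a..b, |P' y + Q' y| ≤ (P b - P a) + (Q a - Q b) := by
  have iP := intervalIntegrable_deriv_of_nonneg_of_le hab hPc hP hP'
  have iQ := intervalIntegrable_deriv_of_nonpos_of_le hab hQc hQ hQ'
  calc ∫ y in a..b, |P' y + Q' y|
      ≤ ∫ y in a..b, (P' y - Q' y) :=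
        integral_mono_on_of_le_Ioo hab (iP.add iQ).abs (iP.sub iQ) fun y hy =>
          abs_le.2 ⟨by linarith [hP' y hy], by linarith [hQ' y hy]⟩
    _ = (P b - P a) + (Q a - Q b) := by
      rw [integral_sub iP iQ, integral_eq_sub_of_hasDerivAt_of_le hab hPc hP iP,
        integral_eq_sub_of_hasDerivAt_of_le hab hQc hQ iQ]
      ring

theorem norm_integral_mul_exp_le_of_nonneg_of_nonpos {a b : ℝ} (hab : a ≤ b)
    {φ θ θ' P P' Q Q' : ℝ → ℝ}
    (hθc : ContinuousOn θ (Icc a b)) (hθ : ∀ y ∈ Ioo a b, HasDerivAt θ (θ' y) y)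
    (hPc : ContinuousOn P (Icc a b)) (hP : ∀ y ∈ Ioo a b, HasDerivAt P (P' y) y)
    (hP' : ∀ y ∈ Ioo a b, 0 ≤ P' y)
    (hQc : ContinuousOn Q (Icc a b)) (hQ : ∀ y ∈ Ioo a b, HasDerivAt Q (Q' y) y)
    (hQ' : ∀ y ∈ Ioo a b, Q' y ≤ 0)
    (hφ : IntervalIntegrable φ volume a b)
    (hφPQ : ∀ y ∈ Ioo a b, (P y + Q y) * θ' y = φ y) :
    ‖∫ y in a..b, (φ y : ℂ) * Complex.exp (θ y * Complex.I)‖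
      ≤ |P a + Q a| + |P b + Q b| + ((P b - P a) + (Q a - Q b)) := by
  have hH' := (intervalIntegrable_deriv_of_nonneg_of_le hab hPc hP hP').add
    (intervalIntegrable_deriv_of_nonpos_of_le hab hQc hQ hQ')
  refine (norm_integral_mul_exp_le hab hθc hθ (hPc.add hQc) (fun y hy => (hP y hy).add (hQ y hy))
    hH' hφ hφPQ).trans ?_
  exact add_le_add_right (integral_abs_add_le_of_nonneg_of_nonpos hab hPc hP hP' hQc hQ hQ') _

/- The partial fraction decomposition of `sin² y / (2N(γ cos y - ν))` in `cos y`. For `ν = γ` the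
pole part vanishes identically (at `y = 0` through Lean's `x / 0 = 0`), which lets one formula
cover both `ν = γ` and `ν > γ`. -/
noncomputable def polyPart (N γ ν y : ℝ) : ℝ := -(γ * cos y + ν) / (2 * N * γ ^ 2)

noncomputable def polePart (N γ ν y : ℝ) : ℝ :=
  (ν ^ 2 - γ ^ 2) / (2 * N * γ ^ 2 * (ν - γ * cos y))

section
variable {N γ ν : ℝ}

theorem continuous_polyPart : Continuous (polyPart N γ ν) := by
  unfold polyPart
  fun_prop

theorem hasDerivAt_polyPart (y : ℝ) :
    HasDerivAt (polyPart N γ ν) (γ * sin y / (2 * N * γ ^ 2)) y := by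
  have := (((hasDerivAt_cos y).const_mul γ).add_const ν).fun_neg.div_const (2 * N * γ ^ 2)
  exact this.congr_deriv (by ring)

theorem polePart_self : polePart N γ γ = 0 := by
  funext y
  simp [polePart]

theorem continuous_polePart (hN : 0 < N) (hγ : 0 < γ) (hν : γ ≤ ν) :
    Continuous (polePart N γ ν) := by
  rcases hν.eq_or_lt with rfl | hlt
  · rw [polePart_self]
    exact continuous_const
  · refine continuous_const.div (by fun_prop) fun y => ?_
    have : 0 < ν - γ * cos y := by nlinarith [cos_le_one y]
    positivity

theorem hasDerivAt_polePart {y : ℝ} (hN : N ≠ 0) (hγ : γ ≠ 0) (hy : ν - γ * cos y ≠ 0) :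
    HasDerivAt (polePart N γ ν)
      (-(ν ^ 2 - γ ^ 2) * γ * sin y / (2 * N * γ ^ 2 * (ν - γ * cos y) ^ 2)) y := by
  have hd := (((hasDerivAt_cos y).const_mul γ).const_sub ν).const_mul (2 * N * γ ^ 2)
  refine ((hasDerivAt_const y (ν ^ 2 - γ ^ 2)).div hd (by simp [hN, hγ, hy])).congr_deriv ?_
  field_simp
  ring

theorem polyPart_add_polePart_mul {y : ℝ} (hN : N ≠ 0) (hγ : γ ≠ 0)
    (hy : ν - γ * cos y ≠ 0) :
    (polyPart N γ ν y + polePart N γ ν y) * (2 * N * (γ * cos y - ν)) = sin y ^ 2 := by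
  have hy' : γ * cos y - ν ≠ 0 := fun h => hy (by linarith)
  rw [sin_sq]
  unfold polyPart polePart
  field_simp
  ring

theorem boundary_and_increment_terms_eq (hN : 0 < N) (hγ : 0 < γ) (hν : γ ≤ ν) :
    |polyPart N γ ν 0 + polePart N γ ν 0| + |polyPart N γ ν (π / 2) + polePart N γ ν (π / 2)|
      + ((polyPart N γ ν (π / 2) - polyPart N γ ν 0)
        + (polePart N γ ν 0 - polePart N γ ν (π / 2)))
      = 1 / (N * γ) + 1 / (N * ν) := by
  have hν0 : 0 < ν := hγ.trans_le hν
  have hpole0 : 0 ≤ polePart N γ ν 0 ∧ polePart N γ ν 0 ≤ -polyPart N γ ν 0 := by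
    simp only [polePart, polyPart, cos_zero, mul_one, neg_div, neg_neg]
    have hd : 0 ≤ 2 * N * γ ^ 2 * (ν - γ) := mul_nonneg (by positivity) (by linarith)
    refine ⟨div_nonneg (by nlinarith) hd, div_le_of_le_mul₀ hd (by positivity) (le_of_eq ?_)⟩
    field_simp
    ring
  have hend : polyPart N γ ν (π / 2) + polePart N γ ν (π / 2) = -1 / (2 * N * ν) := by
    simp only [polePart, polyPart, cos_pi_div_two, mul_zero, zero_add, sub_zero]
    field_simp
    ring
  have hpoly : polyPart N γ ν (π / 2) - polyPart N γ ν 0 = 1 / (2 * N * γ) := by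
    simp only [polyPart, cos_pi_div_two, cos_zero]
    field_simp
    ring
  have hend_nonpos : -1 / (2 * N * ν) ≤ 0 :=
    div_nonpos_of_nonpos_of_nonneg (by norm_num) (by positivity)
  rw [abs_of_nonpos (by linarith), hend, abs_of_nonpos hend_nonpos]
  linear_combination 2 * hpoly - hend

theorem hasDerivAt_phase (y : ℝ) :
    HasDerivAt (fun y => 2 * N * (γ * sin y - ν * y)) (2 * N * (γ * cos y - ν)) y := by
  have := (((hasDerivAt_sin y).const_mul γ).sub ((hasDerivAt_id y).const_mul ν)).const_mul (2 * N)
  exact this.congr_deriv (by simp)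

theorem sub_mul_cos_pos_of_mem_Ioo {y : ℝ} (hγ : 0 < γ) (hν : γ ≤ ν)
    (hy : y ∈ Ioo 0 (π / 2)) : 0 < ν - γ * cos y := by
  have : cos y < 1 := by
    simpa using cos_lt_cos_of_nonneg_of_le_pi le_rfl (by linarith [hy.2, pi_pos]) hy.1
  nlinarith

theorem norm_integral_sin_sq_mul_exp_le_s13 (hN : 0 < N) (hγ : 0 < γ) (hν : γ ≤ ν) :
    ‖∫ y in (0:ℝ)..(π / 2),
        ((sin y ^ 2 : ℝ) : ℂ) * Complex.exp ((2 * N * (γ * sin y - ν * y) : ℝ) * Complex.I)‖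
      ≤ 1 / (N * γ) + 1 / (N * ν) := by
  have hden (y : ℝ) (hy : y ∈ Ioo 0 (π / 2)) : ν - γ * cos y ≠ 0 :=
    (sub_mul_cos_pos_of_mem_Ioo hγ hν hy).ne'
  have hsin (y : ℝ) (hy : y ∈ Ioo 0 (π / 2)) : 0 ≤ sin y :=
    sin_nonneg_of_nonneg_of_le_pi hy.1.le (by linarith [hy.2, pi_pos])
  have hsq : 0 ≤ ν ^ 2 - γ ^ 2 := by nlinarith
  refine (norm_integral_mul_exp_le_of_nonneg_of_nonpos (by positivity) (by fun_prop)
    (fun y _ => hasDerivAt_phase y) continuous_polyPart.continuousOn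
    (fun y _ => hasDerivAt_polyPart y) (fun y hy => ?_)
    (continuous_polePart hN hγ hν).continuousOn
    (fun y hy => hasDerivAt_polePart hN.ne' hγ.ne' (hden y hy)) (fun y hy => ?_)
    ((continuous_sin.pow 2).intervalIntegrable _ _)
    (fun y hy => polyPart_add_polePart_mul hN.ne' hγ.ne' (hden y hy))).trans_eq
    (boundary_and_increment_terms_eq hN hγ hν)
  · have := hsin y hy
    positivity
  · have := hsin y hy
    exact div_nonpos_of_nonpos_of_nonneg (by nlinarith [mul_nonneg hγ.le this]) (by positivity)

end

theorem endpoint_estimate (N γ ν : ℝ) (hN : 2 ≤ N) (hγ : 1 ≤ γ) (hν : γ ≤ ν) :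
    ‖∫ y in (0:ℝ)..(π/2), ((Real.sin y)^2 : ℂ) *
        Complex.exp (2 * π * Complex.I * ((N/π) * (γ * Real.sin y - ν * y)))‖
      ≤ 4 / (N * γ) := by
  have hN0 : 0 < N := by linarith
  have hγ0 : 0 < γ := by linarith
  have hphase (y : ℝ) : 2 * π * Complex.I * ((N / π) * (γ * Real.sin y - ν * y))
      = ((2 * N * (γ * sin y - ν * y) : ℝ) : ℂ) * Complex.I := by
    push_cast
    field_simp
  simp_rw [hphase, ← Complex.ofReal_pow]
  calc _ ≤ 1 / (N * γ) + 1 / (N * ν) := norm_integral_sin_sq_mul_exp_le_s13 hN0 hγ0 hν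
    _ ≤ 4 / (N * γ) := by
      have : 1 / (N * ν) ≤ 1 / (N * γ) := by gcongr
      have : 0 < 1 / (N * γ) := by positivity
      linarith [show 4 / (N * γ) = 4 * (1 / (N * γ)) by ring]
end

section
/- Let N ≥ 2, γ ≥ 1 be reals, ϱ real with |ϱ| ≤ 1/2, and ν an integer with 1 ≤ ν < ⌊γ+ϱ⌋. Set φ(y) = sin(y) and G_ν(y) = (N/π)·(γ·sin(y) + (ϱ−ν)·y). Let y_ν ∈ (0, π/2) satisfy cos(y_ν) = (ν−ϱ)/γ. Then |∫_0^{π/2} φ(y)·exp(2πi·G_ν(y)) dy| ≤ 3π/(√(Nγ)·sin(y_ν)). -/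
/-!
The phase `θ y = 2Nγ (sin y - cos yν * y)` is stationary only at `yν`. Away from `yν` the
first-derivative test applies: integrating by parts against `exp (θ I)`, with `sin / θ'` monotone,
bounds the integrals over `[0, yν - δ]` and `[yν + δ, π/2]` by `π / (Nγ δ sin yν)` each, since
`|y - z| sin z ≤ π |cos y - cos z|`. The window `[yν - δ, yν + δ]` contributes at most `2δ`, and
`δ = 1 / (√(Nγ) sin yν)` balances the two.
-/

open Real intervalIntegral MeasureTheory Set

theorem abs_sub_mul_sin_le_pi_mul_abs_cos_sub {y z : ℝ} (hy : y ∈ Icc 0 (π / 2))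
    (hz : z ∈ Icc 0 (π / 2)) : |y - z| * sin z ≤ π * |cos y - cos z| := by
  obtain ⟨hy0, hy1⟩ := hy
  obtain ⟨hz0, hz1⟩ := hz
  have hsin_half : 0 ≤ sin (z / 2) := sin_nonneg_of_nonneg_of_le_pi (by linarith) (by linarith)
  have hsin_mid : 0 ≤ sin ((y + z) / 2) :=
    sin_nonneg_of_nonneg_of_le_pi (by linarith) (by linarith)
  have hsum : sin z ≤ 2 * sin ((y + z) / 2) := calc
    sin z = 2 * sin (z / 2) * cos (z / 2) := by rw [← sin_two_mul]; ring_nf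
    _ ≤ 2 * sin (z / 2) := mul_le_of_le_one_right (by linarith) (cos_le_one _)
    _ ≤ 2 * sin ((y + z) / 2) := by
      gcongr; exact sin_le_sin_of_le_of_le_pi_div_two (by linarith) (by linarith) (by linarith)
  have hdiff : |y - z| / π ≤ |sin ((y - z) / 2)| := by
    have := mul_abs_le_abs_sin (x := (y - z) / 2) (by rw [abs_le]; constructor <;> linarith)
    rw [abs_div, abs_two] at this
    convert this using 1
    field_simp
  rw [cos_sub_cos, abs_mul, abs_mul, abs_of_nonneg hsin_mid]
  calc |y - z| * sin z ≤ (π * |sin ((y - z) / 2)|) * (2 * sin ((y + z) / 2)) := by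
        gcongr
        · exact sin_nonneg_of_nonneg_of_le_pi hz0 (by linarith)
        · rwa [div_le_iff₀' pi_pos] at hdiff
    _ = π * (|-2| * sin ((y + z) / 2) * |sin ((y - z) / 2)|) := by norm_num; ring

theorem norm_integral_mul_deriv_mul_exp_le_s15 {φ φ' θ θ' : ℝ → ℝ} {c d : ℝ} (hcd : c ≤ d)
    (hφ : ∀ y ∈ Icc c d, HasDerivAt φ (φ' y) y) (hθ : ∀ y ∈ Icc c d, HasDerivAt θ (θ' y) y)
    (hφ'_nonneg : ∀ y ∈ Icc c d, 0 ≤ φ' y)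
    (hφ'_int : IntervalIntegrable φ' volume c d) (hθ'_int : IntervalIntegrable θ' volume c d) :
    ‖∫ y in c..d, ((φ y * θ' y : ℝ) : ℂ) * Complex.exp (θ y * Complex.I)‖ ≤
      |φ c| + |φ d| + (φ d - φ c) := by
  rw [uIcc_of_le hcd |>.symm] at hφ hθ
  set v : ℝ → ℂ := fun y => -Complex.I * Complex.exp (θ y * Complex.I)
  have hv : ∀ y ∈ uIcc c d, HasDerivAt v (θ' y * Complex.exp (θ y * Complex.I)) y := by
    intro y hy
    refine (((hθ y hy).ofReal_comp.mul_const Complex.I).cexp.const_mul (-Complex.I)).congr_deriv ?_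
    linear_combination -((θ' y : ℂ) * Complex.exp (θ y * Complex.I)) * Complex.I_sq
  have hnorm_v : ∀ y, ‖v y‖ = 1 := fun y => by simp [v, Complex.norm_exp_ofReal_mul_I]
  have hθ_cont : ContinuousOn θ (uIcc c d) :=
    fun y hy => (hθ y hy).continuousAt.continuousWithinAt
  have hexp_cont : ContinuousOn (fun y => Complex.exp (θ y * Complex.I)) (uIcc c d) := by
    fun_prop
  have hibp := intervalIntegral.integral_mul_deriv_eq_deriv_mul
    (fun y hy => (hφ y hy).ofReal_comp) hv ⟨hφ'_int.1.ofReal, hφ'_int.2.ofReal⟩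
    (IntervalIntegrable.mul_continuousOn ⟨hθ'_int.1.ofReal, hθ'_int.2.ofReal⟩ hexp_cont)
  have hrem : ‖∫ y in c..d, (φ' y : ℂ) * v y‖ ≤ φ d - φ c := by
    rw [← integral_eq_sub_of_hasDerivAt hφ hφ'_int]
    refine norm_integral_le_of_norm_le hcd (ae_of_all _ fun y hy => ?_) hφ'_int
    rw [norm_mul, hnorm_v, mul_one, Complex.norm_real, norm_of_nonneg]
    exact hφ'_nonneg y (Ioc_subset_Icc_self hy)
  simp_rw [Complex.ofReal_mul, mul_assoc]
  rw [hibp]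
  calc _ ≤ ‖(φ d : ℂ) * v d‖ + ‖(φ c : ℂ) * v c‖ + ‖∫ y in c..d, (φ' y : ℂ) * v y‖ :=
        norm_sub_le_of_le (norm_sub_le _ _) le_rfl
    _ ≤ |φ c| + |φ d| + (φ d - φ c) := by
        simp only [norm_mul, hnorm_v, mul_one, Complex.norm_real, norm_eq_abs]
        linarith

theorem hasDerivAt_sin_div_mul_cos_sub {A k y : ℝ} (hA : A ≠ 0) (hy : cos y ≠ k) :
    HasDerivAt (fun y => sin y / (A * (cos y - k)))
      ((1 - k * cos y) / (A * (cos y - k) ^ 2)) y := by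
  have hne : cos y - k ≠ 0 := sub_ne_zero.mpr hy
  refine ((hasDerivAt_sin y).div (((hasDerivAt_cos y).sub_const k).const_mul A)
    (mul_ne_zero hA hne)).congr_deriv ?_
  field_simp
  linear_combination sin_sq_add_cos_sq y

theorem norm_integral_sin_mul_exp_le {A k c d : ℝ} (hA : 0 < A) (hk : |k| ≤ 1) (hcd : c ≤ d)
    (hk_ne : ∀ y ∈ Icc c d, cos y ≠ k) :
    ‖∫ y in c..d, (sin y : ℂ) * Complex.exp ((A * (sin y - k * y) : ℝ) * Complex.I)‖ ≤
      |sin c / (A * (cos c - k))| + |sin d / (A * (cos d - k))| +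
        (sin d / (A * (cos d - k)) - sin c / (A * (cos c - k))) := by
  have hsin : ∀ y ∈ uIcc c d, sin y / (A * (cos y - k)) * (A * (cos y - k)) = sin y := by
    intro y hy
    rw [uIcc_of_le hcd] at hy
    exact div_mul_cancel₀ _ (mul_ne_zero hA.ne' (sub_ne_zero.mpr (hk_ne y hy)))
  have hφ'_cont : ContinuousOn (fun y => (1 - k * cos y) / (A * (cos y - k) ^ 2)) (Icc c d) :=
    fun y hy => by
      have := pow_ne_zero 2 (sub_ne_zero.mpr (hk_ne y hy))
      fun_prop (disch := positivity)
  calc _ = ‖∫ y in c..d, ((sin y / (A * (cos y - k)) * (A * (cos y - k)) : ℝ) : ℂ) *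
        Complex.exp ((A * (sin y - k * y) : ℝ) * Complex.I)‖ := by
        congr 1; exact integral_congr fun y hy => by rw [hsin y hy]
    _ ≤ _ := ?_
  refine norm_integral_mul_deriv_mul_exp_le_s15 (θ := fun y => A * (sin y - k * y))
    (θ' := fun y => A * (cos y - k)) hcd
    (fun y hy => hasDerivAt_sin_div_mul_cos_sub hA.ne' (hk_ne y hy))
    (fun y _ => (((hasDerivAt_sin y).sub ((hasDerivAt_id y).const_mul k)).const_mul A).congr_deriv
      (by simp))
    (fun y _ => div_nonneg ?_ (by positivity)) (hφ'_cont.intervalIntegrable_of_Icc hcd)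
    ((by fun_prop : Continuous fun y => A * (cos y - k)).intervalIntegrable _ _)
  have : |k * cos y| ≤ 1 := by
    rw [abs_mul]; exact mul_le_one₀ hk (abs_nonneg _) (abs_cos_le_one y)
  linarith [le_abs_self (k * cos y)]

theorem norm_integral_zero_sin_mul_exp_le {A a z : ℝ} (hA : 0 < A) (ha : 0 ≤ a) (haz : a < z)
    (hz : z ≤ π / 2) :
    ‖∫ y in (0)..a, (sin y : ℂ) * Complex.exp ((A * (sin y - cos z * y) : ℝ) * Complex.I)‖ ≤
      2 * |sin a / (A * (cos a - cos z))| := by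
  have hne : ∀ y ∈ Icc 0 a, cos y ≠ cos z := fun y hy =>
    (cos_lt_cos_of_nonneg_of_le_pi hy.1 (by linarith [pi_pos]) (hy.2.trans_lt haz)).ne'
  refine (norm_integral_sin_mul_exp_le hA (abs_cos_le_one z) ha hne).trans ?_
  simp only [sin_zero, zero_div, abs_zero, sub_zero, zero_add]
  linarith [le_abs_self (sin a / (A * (cos a - cos z)))]

theorem norm_integral_pi_div_two_sin_mul_exp_le {A b z : ℝ} (hA : 0 < A) (hz : 0 ≤ z)
    (hzb : z < b) (hb : b ≤ π / 2) :
    ‖∫ y in b..π / 2, (sin y : ℂ) * Complex.exp ((A * (sin y - cos z * y) : ℝ) * Complex.I)‖ ≤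
      2 * |sin b / (A * (cos b - cos z))| := by
  have hne : ∀ y ∈ Icc b (π / 2), cos y ≠ cos z := fun y hy =>
    (cos_lt_cos_of_nonneg_of_le_pi hz (by linarith [hy.2, pi_pos]) (hzb.trans_le hy.1)).ne
  refine (norm_integral_sin_mul_exp_le hA (abs_cos_le_one z) hb hne).trans ?_
  have hend : sin (π / 2) / (A * (cos (π / 2) - cos z)) ≤ 0 := by
    rw [sin_pi_div_two, cos_pi_div_two, zero_sub, mul_neg]
    exact div_nonpos_of_nonneg_of_nonpos zero_le_one
      (neg_nonpos.mpr (mul_nonneg hA.le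
        (cos_nonneg_of_mem_Icc ⟨by linarith [pi_pos], by linarith⟩)))
  rw [abs_of_nonpos hend]
  linarith [neg_abs_le (sin b / (A * (cos b - cos z)))]

theorem abs_sin_div_mul_cos_sub_le {A δ y z : ℝ} (hA : 0 < A) (hy : y ∈ Icc 0 (π / 2))
    (hz : z ∈ Icc 0 (π / 2)) (hδ : 0 < δ) (hδyz : δ ≤ |y - z|) (hsz : 0 < sin z) :
    |sin y / (A * (cos y - cos z))| ≤ π / (A * δ * sin z) := by
  have key := abs_sub_mul_sin_le_pi_mul_abs_cos_sub hy hz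
  have hcos : 0 < |cos y - cos z| := by
    have := mul_pos (hδ.trans_le hδyz) hsz
    nlinarith [pi_pos]
  rw [abs_div, abs_mul, abs_of_pos hA, div_le_div_iff₀ (by positivity) (by positivity)]
  calc |sin y| * (A * δ * sin z) ≤ 1 * (A * δ * sin z) :=
        mul_le_mul_of_nonneg_right (abs_sin_le_one y) (by positivity)
    _ = A * (δ * sin z) := by ring
    _ ≤ A * (π * |cos y - cos z|) :=
        mul_le_mul_of_nonneg_left ((mul_le_mul_of_nonneg_right hδyz hsz.le).trans key) hA.le
    _ = π * (A * |cos y - cos z|) := by ring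

theorem norm_integral_zero_max_sin_mul_exp_le {A δ z : ℝ} (hA : 0 < A)
    (hz : z ∈ Ioo 0 (π / 2)) (hδ : 0 < δ) :
    ‖∫ y in (0)..max 0 (z - δ),
        (sin y : ℂ) * Complex.exp ((A * (sin y - cos z * y) : ℝ) * Complex.I)‖ ≤
      2 * π / (A * δ * sin z) := by
  have hsz : 0 < sin z := sin_pos_of_pos_of_lt_pi hz.1 (by linarith [hz.2, pi_pos])
  rcases max_choice 0 (z - δ) with ha | ha <;> rw [ha]
  · rw [integral_same, norm_zero]; positivity
  have ha0 : 0 ≤ z - δ := ha ▸ le_max_left 0 (z - δ)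
  refine (norm_integral_zero_sin_mul_exp_le hA ha0 (by linarith) hz.2.le).trans ?_
  rw [mul_div_assoc]
  gcongr
  exact abs_sin_div_mul_cos_sub_le hA ⟨ha0, by linarith [hz.2]⟩ (Ioo_subset_Icc_self hz) hδ
    (by rw [abs_sub_comm, sub_sub_cancel, abs_of_pos hδ]) hsz

theorem norm_integral_min_pi_div_two_sin_mul_exp_le {A δ z : ℝ} (hA : 0 < A)
    (hz : z ∈ Ioo 0 (π / 2)) (hδ : 0 < δ) :
    ‖∫ y in min (π / 2) (z + δ)..π / 2,
        (sin y : ℂ) * Complex.exp ((A * (sin y - cos z * y) : ℝ) * Complex.I)‖ ≤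
      2 * π / (A * δ * sin z) := by
  have hsz : 0 < sin z := sin_pos_of_pos_of_lt_pi hz.1 (by linarith [hz.2, pi_pos])
  rcases min_choice (π / 2) (z + δ) with hb | hb <;> rw [hb]
  · rw [integral_same, norm_zero]; positivity
  have hb2 : z + δ ≤ π / 2 := hb ▸ min_le_left (π / 2) (z + δ)
  refine (norm_integral_pi_div_two_sin_mul_exp_le hA hz.1.le (by linarith) hb2).trans ?_
  rw [mul_div_assoc]
  gcongr
  exact abs_sin_div_mul_cos_sub_le hA ⟨by linarith [hz.1], hb2⟩ (Ioo_subset_Icc_self hz) hδ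
    (by rw [add_sub_cancel_left, abs_of_pos hδ]) hsz

theorem norm_integral_sin_mul_exp_le_of_stationary_point {A δ z : ℝ} (hA : 0 < A)
    (hz : z ∈ Ioo 0 (π / 2)) (hδ : 0 < δ) :
    ‖∫ y in (0)..π / 2, (sin y : ℂ) * Complex.exp ((A * (sin y - cos z * y) : ℝ) * Complex.I)‖ ≤
      4 * π / (A * δ * sin z) + 2 * δ := by
  set f : ℝ → ℂ := fun y => (sin y : ℂ) * Complex.exp ((A * (sin y - cos z * y) : ℝ) * Complex.I)
  have hf_int : ∀ u v, IntervalIntegrable f volume u v :=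
    (by fun_prop : Continuous f).intervalIntegrable
  set a := max 0 (z - δ)
  set b := min (π / 2) (z + δ)
  have hmid : ‖∫ y in a..b, f y‖ ≤ 2 * δ := by
    have hab : |b - a| ≤ 2 * δ := by
      have haz : a ≤ z := max_le hz.1.le (by linarith)
      have hzb : z ≤ b := le_min hz.2.le (by linarith)
      rw [abs_le]; constructor <;> linarith [le_max_right 0 (z - δ), min_le_right (π / 2) (z + δ)]
    refine (intervalIntegral.norm_integral_le_of_norm_le_const fun y _ => ?_).trans
      (one_mul |b - a| ▸ hab)
    simp only [f, norm_mul, Complex.norm_exp_ofReal_mul_I, mul_one, Complex.norm_real, norm_eq_abs]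
    exact abs_sin_le_one y
  rw [← integral_add_adjacent_intervals (hf_int 0 a) (hf_int a (π / 2)),
    ← integral_add_adjacent_intervals (hf_int a b) (hf_int b (π / 2))]
  calc _ ≤ ‖∫ y in (0)..a, f y‖ + (‖∫ y in a..b, f y‖ + ‖∫ y in b..π / 2, f y‖) :=
        (norm_add_le _ _).trans (add_le_add_right (norm_add_le _ _) _)
    _ ≤ 2 * π / (A * δ * sin z) + (2 * δ + 2 * π / (A * δ * sin z)) := by
        gcongr
        · exact norm_integral_zero_max_sin_mul_exp_le hA hz hδ
        · exact norm_integral_min_pi_div_two_sin_mul_exp_le hA hz hδ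
    _ = 4 * π / (A * δ * sin z) + 2 * δ := by ring

theorem interior_estimate_general (N γ ϱ : ℝ) (hN : 2 ≤ N) (hγ : 1 ≤ γ)
    (ν : ℤ) (yν : ℝ) (hyν : yν ∈ Set.Ioo 0 (π/2)) (hcos : Real.cos yν = ((ν : ℝ) - ϱ) / γ) :
    ‖∫ y in (0:ℝ)..(π/2), ((Real.sin y) : ℂ) *
        Complex.exp (2 * π * Complex.I * ((N/π) * (γ * Real.sin y + (ϱ - (ν : ℝ)) * y)))‖
      ≤ 3 * π / (Real.sqrt (N * γ) * Real.sin yν) := by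
  have hγ0 : 0 < γ := by linarith
  have hNγ : 0 < N * γ := by positivity
  have hs : 0 < sin yν := sin_pos_of_pos_of_lt_pi hyν.1 (by linarith [hyν.2, pi_pos])
  set Q := √(N * γ)
  have hQ : 0 < Q := sqrt_pos.mpr hNγ
  have hQ2 : Q ^ 2 = N * γ := sq_sqrt hNγ.le
  have hphase : ∀ y : ℝ, 2 * π * Complex.I * ((N / π) * (γ * sin y + (ϱ - (ν : ℝ)) * y)) =
      ((2 * (N * γ) * (sin y - cos yν * y) : ℝ) : ℂ) * Complex.I := by
    intro y
    have : 2 * (N * γ) * (sin y - cos yν * y) =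
        2 * π * ((N / π) * (γ * sin y + (ϱ - ν) * y)) := by
      rw [hcos]; field_simp; ring
    rw [this]
    push_cast
    ring
  simp only [hphase]
  refine (norm_integral_sin_mul_exp_le_of_stationary_point (δ := 1 / (Q * sin yν))
    (by positivity) hyν (by positivity)).trans ?_
  calc 4 * π / (2 * (N * γ) * (1 / (Q * sin yν)) * sin yν) + 2 * (1 / (Q * sin yν))
      = (2 * π * sin yν + 2) / (Q * sin yν) := by
        rw [← hQ2]; field_simp; ring
    _ ≤ 3 * π / (Q * sin yν) := by
        gcongr
        nlinarith [sin_le_one yν, pi_gt_three]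

theorem interior_estimate (N γ ϱ : ℝ) (hN : 2 ≤ N) (hγ : 1 ≤ γ)
    (hϱ : |ϱ| ≤ 1/2) (ν : ℤ) (hν₁ : 1 ≤ ν) (hν₂ : ν < ⌊γ + ϱ⌋)
    (yν : ℝ) (hyν : yν ∈ Set.Ioo 0 (π/2)) (hcos : Real.cos yν = ((ν : ℝ) - ϱ) / γ) :
    ‖∫ y in (0:ℝ)..(π/2), ((Real.sin y) : ℂ) *
        Complex.exp (2 * π * Complex.I * ((N/π) * (γ * Real.sin y + (ϱ - (ν : ℝ)) * y)))‖
      ≤ 3 * π / (Real.sqrt (N * γ) * Real.sin yν) :=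
  interior_estimate_general N γ ϱ hN hγ ν yν hyν hcos
end

section
/- (First-derivative Euler–MacLaurin formula) Let f : [a,b] → ℝ be continuously differentiable and N a positive integer. Then ∫_a^b f(x) dx = ((b−a)/(2N))·(f(a)+f(b)) + ((b−a)/N)·∑_{k=1}^{N−1} f(a + k(b−a)/N) − ((b−a)/N)·∫_a^b ( (x−a)N/(b−a) − ⌊(x−a)N/(b−a)⌋ − 1/2 )·f'(x) dx. -/
/-!
Cut `[a, b]` into `N` cells of length `h = (b - a) / N`. On a cell `[u, v]`, integrating by
parts against `x - (u + v) / 2` gives the trapezoid rule `(v - u) / 2 * (f u + f v)` with error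
`∫ (x - (u + v) / 2) * f' x`, and off the right endpoint this kernel is `h` times the sawtooth
`fract ((x - a) / h) - 1 / 2`. Summing over the cells counts every interior node twice.
-/

open intervalIntegral Finset MeasureTheory

noncomputable def sawtooth (t : ℝ) : ℝ := Int.fract t - 1 / 2

theorem Finset.sum_range_add_add_one {M : Type*} [AddCommMonoid M] (g : ℕ → M) {N : ℕ}
    (hN : 0 < N) :
    ∑ k ∈ range N, (g k + g (k + 1)) = g 0 + g N + 2 • ∑ k ∈ Ico 1 N, g k := by
  rw [sum_add_distrib, sum_range_eq_add_Ico g hN, range_eq_Ico, sum_Ico_add',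
    sum_Ico_succ_top hN, two_nsmul]
  abel

theorem integral_eq_trapezoid_sub_integral_mul_deriv {f f' : ℝ → ℝ} {u v : ℝ}
    (hf : ∀ x ∈ Set.uIcc u v, HasDerivAt f (f' x) x) (hf' : IntervalIntegrable f' volume u v) :
    ∫ x in u..v, f x = (v - u) / 2 * (f u + f v) - ∫ x in u..v, (x - (u + v) / 2) * f' x := by
  have := integral_mul_deriv_eq_deriv_mul (fun x _ => (hasDerivAt_id' x).sub_const ((u + v) / 2))
    hf intervalIntegrable_const hf'
  simp only [one_mul] at this
  rw [this]
  ring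

theorem mul_sawtooth_div_eq {a h x : ℝ} (hh : 0 < h) {k : ℤ}
    (hx : x ∈ Set.Ico (a + k * h) (a + (k + 1) * h)) :
    h * sawtooth ((x - a) / h) = x - ((a + k * h) + (a + (k + 1) * h)) / 2 := by
  have hfract : Int.fract ((x - a) / h) = (x - a) / h - k := by
    rw [Int.fract_eq_iff]
    refine ⟨?_, ?_, k, by ring⟩
    · rw [sub_nonneg, le_div_iff₀ hh]; linarith [hx.1]
    · rw [sub_lt_iff_lt_add', div_lt_iff₀ hh]; linarith [hx.2]
  rw [sawtooth, hfract]
  field_simp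
  ring

section Cell

variable {f f' : ℝ → ℝ} {a h : ℝ} (k : ℤ)

theorem eqOn_sawtooth_mul_uIoo (hh : 0 < h) :
    Set.EqOn (fun x => sawtooth ((x - a) / h) * f' x)
      (fun x => h⁻¹ * ((x - ((a + k * h) + (a + (k + 1) * h)) / 2) * f' x))
      (Set.uIoo (a + k * h) (a + (k + 1) * h)) := by
  intro x hx
  rw [Set.uIoo_of_le (by nlinarith)] at hx
  simp only [← mul_sawtooth_div_eq hh (Set.Ioo_subset_Ico_self hx)]
  field_simp

theorem IntervalIntegrable.sawtooth_mul (hh : 0 < h)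
    (hf' : IntervalIntegrable f' volume (a + k * h) (a + (k + 1) * h)) :
    IntervalIntegrable (fun x => sawtooth ((x - a) / h) * f' x) volume
      (a + k * h) (a + (k + 1) * h) :=
  (intervalIntegrable_congr_uIoo (eqOn_sawtooth_mul_uIoo k hh)).2
    ((hf'.continuousOn_mul (by fun_prop)).const_mul _)

theorem integral_eq_trapezoid_sub_integral_sawtooth_mul (hh : 0 < h)
    (hf : ∀ x ∈ Set.uIcc (a + k * h) (a + (k + 1) * h), HasDerivAt f (f' x) x)
    (hf' : IntervalIntegrable f' volume (a + k * h) (a + (k + 1) * h)) :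
    ∫ x in a + k * h..a + (k + 1) * h, f x
      = h / 2 * (f (a + k * h) + f (a + (k + 1) * h))
        - h * ∫ x in a + k * h..a + (k + 1) * h, sawtooth ((x - a) / h) * f' x := by
  rw [integral_eq_trapezoid_sub_integral_mul_deriv hf hf',
    integral_congr_uIoo (eqOn_sawtooth_mul_uIoo k hh), intervalIntegral.integral_const_mul,
    mul_inv_cancel_left₀ hh.ne']
  ring

end Cell

theorem uIcc_add_mul_subset_Icc {a h : ℝ} (hh : 0 ≤ h) {k : ℤ} {N : ℕ} (hk₀ : 0 ≤ k)
    (hkN : k < N) :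
    Set.uIcc (a + k * h) (a + (k + 1) * h) ⊆ Set.Icc a (a + N * h) := by
  have hk₀' : (0 : ℝ) ≤ k := by exact_mod_cast hk₀
  have hkN' : (k : ℝ) + 1 ≤ N := by exact_mod_cast Int.add_one_le_of_lt hkN
  rw [Set.uIcc_of_le (by nlinarith)]
  exact Set.Icc_subset_Icc (by nlinarith) (by nlinarith)

theorem integral_eq_trapezoid_sum_sub_integral_sawtooth_mul {f f' : ℝ → ℝ} {a h : ℝ}
    (hh : 0 < h) {N : ℕ} (hN : 0 < N)
    (hf : ∀ x ∈ Set.Icc a (a + N * h), HasDerivAt f (f' x) x)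
    (hf' : IntervalIntegrable f' volume a (a + N * h)) :
    ∫ x in a..a + N * h, f x
      = h / 2 * (f a + f (a + N * h)) + h * ∑ k ∈ Ico 1 N, f (a + k * h)
        - h * ∫ x in a..a + N * h, sawtooth ((x - a) / h) * f' x := by
  set p : ℕ → ℝ := fun k => a + k * h with hp
  have hp0 : p 0 = a := by simp [hp]
  have hnodes : ∀ k : ℕ, p k = a + ((k : ℤ) : ℝ) * h ∧ p (k + 1) = a + (((k : ℤ) : ℝ) + 1) * h :=
    fun k => ⟨by simp [hp], by simp [hp]⟩
  have hsub : ∀ k < N, Set.uIcc (a + ((k : ℤ) : ℝ) * h) (a + (((k : ℤ) : ℝ) + 1) * h)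
      ⊆ Set.Icc a (a + N * h) := fun k hk =>
    uIcc_add_mul_subset_Icc hh.le (Int.natCast_nonneg k) (by exact_mod_cast hk)
  have hpiece : ∀ k < N, ∫ x in p k..p (k + 1), f x
      = h / 2 * (f (p k) + f (p (k + 1)))
        - h * ∫ x in p k..p (k + 1), sawtooth ((x - a) / h) * f' x := fun k hk => by
    rw [(hnodes k).1, (hnodes k).2]
    exact integral_eq_trapezoid_sub_integral_sawtooth_mul (k : ℤ) hh
      (fun x hx => hf x (hsub k hk hx)) (hf'.mono_set ((hsub k hk).trans Set.Icc_subset_uIcc))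
  have hsum_f := sum_integral_adjacent_intervals (a := p) (μ := volume) fun k hk => by
    rw [(hnodes k).1, (hnodes k).2]
    exact ((HasDerivAt.continuousOn hf).mono (hsub k hk)).intervalIntegrable
  have hsum_saw := sum_integral_adjacent_intervals (a := p) fun k hk => by
    rw [(hnodes k).1, (hnodes k).2]
    exact IntervalIntegrable.sawtooth_mul (k : ℤ) hh
      (hf'.mono_set ((hsub k hk).trans Set.Icc_subset_uIcc))
  rw [hp0] at hsum_f hsum_saw
  calc ∫ x in a..a + N * h, f x
      = ∑ k ∈ range N, (h / 2 * (f (p k) + f (p (k + 1)))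
          - h * ∫ x in p k..p (k + 1), sawtooth ((x - a) / h) * f' x) := by
        rw [← hsum_f]
        exact sum_congr rfl fun k hk => hpiece k (mem_range.1 hk)
    _ = h / 2 * (f a + f (a + N * h) + 2 • ∑ k ∈ Ico 1 N, f (p k))
          - h * ∫ x in a..a + N * h, sawtooth ((x - a) / h) * f' x := by
        rw [sum_sub_distrib, ← mul_sum, ← mul_sum, sum_range_add_add_one _ hN, hsum_saw, hp0]
    _ = _ := by
        rw [nsmul_eq_mul]
        ring

theorem euler_maclaurin_first (a b : ℝ) (hab : a < b) (N : ℕ) (hN : 0 < N)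
    (f f' : ℝ → ℝ)
    (hf : ∀ x ∈ Set.Icc a b, HasDerivAt f (f' x) x)
    (hf' : ContinuousOn f' (Set.Icc a b)) :
    ∫ x in a..b, f x
      = ((b - a) / (2 * N)) * (f a + f b)
        + ((b - a) / N) * ∑ k ∈ Finset.Ico 1 N, f (a + k * (b - a) / N)
        - ((b - a) / N) * ∫ x in a..b,
            ((x - a) * N / (b - a) - ⌊(x - a) * N / (b - a)⌋ - 1/2) * f' x := by
  have hb : a + N * ((b - a) / N) = b := by field_simp; ring
  have hmain := integral_eq_trapezoid_sum_sub_integral_sawtooth_mul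
    (div_pos (sub_pos.2 hab) (Nat.cast_pos.2 hN)) hN (by rwa [hb])
    (by rw [hb]; exact hf'.intervalIntegrable_of_Icc hab.le)
  rw [hb] at hmain
  simp only [sawtooth, Int.fract, div_div_eq_mul_div, ← mul_div_assoc] at hmain
  rw [hmain]
  ring
end
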